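/- arXiv:1704.01278 — 2 statements merged into one kernel-verified Lean document; each statement's English description precedes it below -/
import Mathlib

section
/- Let (R, 𝔪) be a Noetherian local ring, I an 𝔪-primary ideal, and a ∈ I a nonzerodivisor of R with I² = aI. Then I/I² is a free R/I-module if and only if I/(a) is a free R/I-module. -/
/-!
Let `M = I/I²` and let `x ∈ M` be the class of `a`. As `a` is a nonzerodivisor and `I² = aI`,
the annihilator of `x` is exactly `I`, so `R·x ≅ R/I`; and `M/R·x ≅ I/(a)` because `I² ⊆ (a)`.
If `M/R·x` is free over `R/I`, the sequence `0 → R/I → M → M/R·x → 0` splits, so `M` is free.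
Conversely, if `M ≅ (R/I)ᴺ`, not all coordinates of `x` lie in `𝔪/I`: since `𝔪ᵏ ⊆ I` there is
`t ∉ I` with `t𝔪 ⊆ I`, and such a `t` would kill `x`. A vector with a unit coordinate is part of
a basis, so `M/R·x` is free again.
-/

open Submodule IsLocalRing

section

variable {R : Type*} [CommRing R]

noncomputable def quotSpanEquivOfIsUnit {n : ℕ} (y : Fin (n + 1) → R) {i : Fin (n + 1)}
    (hi : IsUnit (y i)) : ((Fin (n + 1) → R) ⧸ R ∙ y) ≃ₗ[R] (Fin n → R) :=
  let π : (Fin (n + 1) → R) →ₗ[R] (Fin n → R) :=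
    LinearMap.funLeft R R i.succAbove ∘ₗ
      (LinearMap.id - ((↑hi.unit⁻¹ : R) • LinearMap.proj i).smulRight y)
  have hπ : ∀ v j, π v j = v (i.succAbove j) - v i * ↑hi.unit⁻¹ * y (i.succAbove j) := by
    intro v j
    simp [π, LinearMap.funLeft_apply, mul_comm]
  have hker : LinearMap.ker π = R ∙ y := by
    ext v
    rw [LinearMap.mem_ker, mem_span_singleton]
    constructor
    · intro hv
      refine ⟨v i * ↑hi.unit⁻¹, funext fun k => ?_⟩
      rcases i.eq_self_or_eq_succAbove k with rfl | ⟨j, rfl⟩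
      · simp [mul_assoc, hi.val_inv_mul]
      · simpa [hπ, sub_eq_zero, eq_comm] using congrFun hv j
    · rintro ⟨c, rfl⟩
      funext j
      simp [hπ, mul_assoc, hi.mul_val_inv]
  have hsurj : Function.Surjective π := fun w =>
    ⟨i.insertNth 0 w, funext fun j => by simp [hπ]⟩
  (quotEquivOfEq _ _ hker.symm).trans (π.quotKerEquivOfSurjective hsurj)

theorem nonempty_linearEquiv_fin_succ_of_ker_eq_span {M : Type*} [AddCommGroup M] [Module R M]
    {x : M} (hx : ∀ r : R, r • x = 0 → r = 0) {n : ℕ} (ψ : M →ₗ[R] (Fin n → R))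
    (hψ : Function.Surjective ψ) (hker : LinearMap.ker ψ = R ∙ x) :
    Nonempty (M ≃ₗ[R] (Fin (n + 1) → R)) := by
  obtain ⟨σ, hσ⟩ := Module.projective_lifting_property ψ LinearMap.id hψ
  have hexact : Function.Exact (LinearMap.toSpanSingleton R M x) ψ := by
    rw [LinearMap.exact_iff, hker, LinearMap.span_singleton_eq_range]
  have hinj : Function.Injective (LinearMap.toSpanSingleton R M x) :=
    (injective_iff_map_eq_zero _).mpr hx
  exact ⟨(hexact.splitSurjectiveEquiv hinj ⟨σ, hσ⟩).1.trans
    (Fin.consLinearEquiv R fun _ => R)⟩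

theorem Submodule.comap_subtype_span_singleton {M : Type*} [AddCommGroup M] [Module R M]
    {p : Submodule R M} (x : p) : comap p.subtype (R ∙ (x : M)) = R ∙ x := by
  rw [← map_subtype_span_singleton, comap_map_eq_of_injective p.injective_subtype]

noncomputable def Submodule.quotientQuotientSpanEquiv {N : Type*} [AddCommGroup N] [Module R N]
    {P : Submodule R N} {z : N} (h : P ≤ R ∙ z) : ((N ⧸ P) ⧸ R ∙ P.mkQ z) ≃ₗ[R] N ⧸ R ∙ z :=
  have hmap : map P.mkQ (R ∙ z) = R ∙ P.mkQ z := by rw [map_span, Set.image_singleton]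
  (quotEquivOfEq _ _ hmap.symm).trans (quotientQuotientEquivQuotient _ _ h)

theorem Ideal.exists_notMem_forall_mul_mem_of_pow_le {I J : Ideal R} (hI : I ≠ ⊤) {k : ℕ}
    (hk : J ^ k ≤ I) : ∃ t ∉ I, ∀ r ∈ J, t * r ∈ I := by
  induction k with
  | zero => exact absurd (top_le_iff.mp (by simpa using hk)) hI
  | succ k ih =>
    by_cases h : J ^ k ≤ I
    · exact ih h
    · obtain ⟨t, htJ, htI⟩ := SetLike.not_le_iff_exists.mp h
      exact ⟨t, htI, fun r hr => hk (pow_succ J k ▸ Ideal.mul_mem_mul htJ hr)⟩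

theorem IsLocalRing.exists_isUnit_apply_of_annihilator_le [IsLocalRing R] {I : Ideal R}
    (hI : I ≠ ⊤) {k : ℕ} (hk : maximalIdeal R ^ k ≤ I) {ι : Type*} (y : ι → R ⧸ I)
    (hy : ∀ r : R, r • y = 0 → r ∈ I) : ∃ i, IsUnit (y i) := by
  by_contra! hunit
  obtain ⟨t, htI, ht⟩ := Ideal.exists_notMem_forall_mul_mem_of_pow_le hI hk
  refine htI (hy t (funext fun i => ?_))
  obtain ⟨r, hr⟩ := Ideal.Quotient.mk_surjective (y i)
  have hrm : r ∈ maximalIdeal R := fun hru => hunit i (hr ▸ hru.map _)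
  rw [Pi.smul_apply, ← hr, Pi.zero_apply, Algebra.smul_def, Ideal.Quotient.algebraMap_eq,
    ← map_mul, Ideal.Quotient.eq_zero_iff_mem]
  exact ht r hrm

theorem exists_quotient_span_equiv_fin_of_linearEquiv [IsLocalRing R] {I : Ideal R} (hI : I ≠ ⊤)
    {k : ℕ} (hk : maximalIdeal R ^ k ≤ I) {M : Type*} [AddCommGroup M] [Module R M] {x : M}
    (hx : ∀ r : R, r • x = 0 → r ∈ I) {N : ℕ} (f : M ≃ₗ[R] (Fin N → R ⧸ I)) :
    ∃ n : ℕ, Nonempty ((M ⧸ R ∙ x) ≃ₗ[R] (Fin n → R ⧸ I)) := by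
  have hfx : ∀ r : R, r • f x = 0 → r ∈ I := fun r h =>
    hx r (f.injective (by rwa [map_smul, map_zero]))
  obtain ⟨i, hi⟩ := exists_isUnit_apply_of_annihilator_le hI hk (f x) hfx
  obtain ⟨n, rfl⟩ : ∃ n, N = n + 1 := Nat.exists_eq_succ_of_ne_zero i.pos.ne'
  refine ⟨n, ?_⟩
  have hspan : (R ∙ f x) = (span (R ⧸ I) {f x}).restrictScalars R :=
    (restrictScalars_span R (R ⧸ I) Ideal.Quotient.mk_surjective _).symm
  exact ⟨(Quotient.equiv _ _ f (by rw [map_span, Set.image_singleton]; rfl)).trans <|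
    (quotEquivOfEq _ _ hspan).trans <| (Quotient.restrictScalarsEquiv R _).trans <|
      (quotSpanEquivOfIsUnit (f x) hi).restrictScalars R⟩

theorem nonempty_linearEquiv_fin_succ_of_quotient_span_equiv {I : Ideal R} {M : Type*}
    [AddCommGroup M] [Module R M] (hM : Module.IsTorsionBySet R M I) {x : M}
    (hx : ∀ r : R, r • x = 0 → r ∈ I) {n : ℕ} (e : (M ⧸ R ∙ x) ≃ₗ[R] (Fin n → R ⧸ I)) :
    Nonempty (M ≃ₗ[R] (Fin (n + 1) → R ⧸ I)) := by
  let := hM.module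
  have hmk : Function.Surjective (algebraMap R (R ⧸ I)) := Ideal.Quotient.mk_surjective
  let ψ := (e.toLinearMap ∘ₗ (R ∙ x).mkQ).extendScalarsOfSurjective hmk
  have hψ : Function.Surjective ψ := e.surjective.comp (R ∙ x).mkQ_surjective
  have hker : LinearMap.ker ψ = span (R ⧸ I) {x} := by
    refine restrictScalars_injective R _ _ ?_
    rw [restrictScalars_span R (R ⧸ I) hmk]
    exact (LinearMap.ker_comp _ _).trans (by simp)
  have hfaithful : ∀ s : R ⧸ I, s • x = 0 → s = 0 := by
    rintro ⟨r⟩ h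
    exact Ideal.Quotient.eq_zero_iff_mem.mpr (hx r h)
  obtain ⟨f⟩ := nonempty_linearEquiv_fin_succ_of_ker_eq_span hfaithful ψ hψ hker
  exact ⟨f.restrictScalars R⟩

section IdealQuotient

variable (I : Ideal R)

theorem isTorsionBySet_quotient_comap_subtype_mul :
    Module.IsTorsionBySet R (I ⧸ comap I.subtype (I * I)) I := by
  rintro ⟨z⟩ ⟨r, hr⟩
  exact (Quotient.mk_eq_zero _).mpr (Ideal.mul_mem_mul hr z.2)

variable {I} {a : R} (ha : a ∈ I)

theorem mem_of_smul_mk_eq_zero (hnzd : a ∈ nonZeroDivisors R)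
    (hred : I * I ≤ Ideal.span {a} * I) {r : R}
    (h : r • (Submodule.Quotient.mk ⟨a, ha⟩ : I ⧸ comap I.subtype (I * I)) = 0) : r ∈ I := by
  rw [← Quotient.mk_smul, Quotient.mk_eq_zero, mem_comap] at h
  obtain ⟨t, htI, hta⟩ := Ideal.mem_span_singleton_mul.mp (hred h)
  obtain rfl : t = r := (mul_cancel_left_mem_nonZeroDivisors hnzd).mp (hta.trans (mul_comm r a))
  exact htI

end IdealQuotient

end

theorem cotangent_free_iff_quot_span_free_general (R : Type*) [CommRing R] [IsLocalRing R]
    (I : Ideal R) (hIm : I ≤ IsLocalRing.maximalIdeal R)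
    (hprim : ∃ n : ℕ, IsLocalRing.maximalIdeal R ^ n ≤ I)
    (a : R) (ha : a ∈ I) (hnzd : a ∈ nonZeroDivisors R)
    (hred : I * I = Ideal.span {a} * I) :
    (∃ n : ℕ, Nonempty
        ((↥I ⧸ Submodule.comap I.subtype (I * I)) ≃ₗ[R] (Fin n → R ⧸ I))) ↔
      (∃ n : ℕ, Nonempty
        ((↥I ⧸ Submodule.comap I.subtype (Ideal.span {a})) ≃ₗ[R] (Fin n → R ⧸ I))) := by
  have hI : I ≠ ⊤ := ne_top_of_le_ne_top (maximalIdeal.isMaximal R).ne_top hIm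
  obtain ⟨k, hk⟩ := hprim
  have hx : ∀ r : R, r • Submodule.Quotient.mk (p := comap I.subtype (I * I)) ⟨a, ha⟩ = 0 →
      r ∈ I := fun _ => mem_of_smul_mk_eq_zero ha hnzd hred.le
  have hspan := comap_subtype_span_singleton (⟨a, ha⟩ : I)
  have hle : comap I.subtype (I * I) ≤ R ∙ ⟨a, ha⟩ :=
    hspan ▸ comap_mono (hred ▸ Ideal.mul_le_left)
  let e := (quotientQuotientSpanEquiv hle).trans (quotEquivOfEq _ _ hspan.symm)
  constructor
  · rintro ⟨N, ⟨f⟩⟩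
    obtain ⟨n, ⟨g⟩⟩ := exists_quotient_span_equiv_fin_of_linearEquiv hI hk hx f
    exact ⟨n, ⟨e.symm.trans g⟩⟩
  · rintro ⟨n, ⟨f⟩⟩
    exact ⟨n + 1, nonempty_linearEquiv_fin_succ_of_quotient_span_equiv
      (isTorsionBySet_quotient_comap_subtype_mul I) hx (e.trans f)⟩

/-- If `(R, 𝔪)` is a Noetherian local ring, `I` an `𝔪`-primary ideal and `a ∈ I` a
nonzerodivisor with `I² = aI`, then `I/I²` is a free `R/I`-module if and only if
`I/(a)` is a free `R/I`-module. -/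
theorem cotangent_free_iff_quot_span_free (R : Type*) [CommRing R] [IsNoetherianRing R]
    [IsLocalRing R]
    (I : Ideal R) (hIm : I ≤ IsLocalRing.maximalIdeal R)
    (hprim : ∃ n : ℕ, IsLocalRing.maximalIdeal R ^ n ≤ I)
    (a : R) (ha : a ∈ I) (hnzd : a ∈ nonZeroDivisors R)
    (hred : I * I = Ideal.span {a} * I) :
    (∃ n : ℕ, Nonempty
        ((↥I ⧸ Submodule.comap I.subtype (I * I)) ≃ₗ[R] (Fin n → R ⧸ I))) ↔
      (∃ n : ℕ, Nonempty
        ((↥I ⧸ Submodule.comap I.subtype (Ideal.span {a})) ≃ₗ[R] (Fin n → R ⧸ I))) :=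
  cotangent_free_iff_quot_span_free_general R I hIm hprim a ha hnzd hred
end

section
/- Let R be a one-dimensional Cohen–Macaulay Noetherian local ring with maximal ideal 𝔪, let a ∈ 𝔪 be a nonzerodivisor of R, and let A = R ⋉ R be the idealization of R over itself. Then the ideal I = (a) × R = {(x, y) ∈ A : x ∈ aR} is an Ulrich ideal of A, and μ_A(I) = 2. -/
/-!
Write `α = (a, 0)` and `ε = (0, 1)`, so that `I = (a) × R = (α, ε)`. Since `ε² = 0` we get
`I² = αI`, and `α` is a nonzerodivisor because `a` is. Comparing components in `cα + dε = αw`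
with `w ∈ I` shows that `cα + dε ∈ I²` forces `c, d ∈ I`, so `I/I²` is free on the classes of
`α` and `ε`. A single generator `g` of `I` would give `ε = cg` with `fst g ∈ 𝔪`, forcing `fst c`
to be a unit and `fst g = 0`, and then `α ∉ (g)`; hence `μ(I) = 2`. Finally `I` is `𝔫`-primary
because `(a)` is `𝔪`-primary: a nonzerodivisor lies in no minimal prime, so in dimension one the
only prime containing `a` is `𝔪`.
-/

open IsLocalRing

open TrivSqZeroExt

section KrullDimOne

variable {R : Type*} [CommRing R]

lemma Ideal.IsPrime.isMaximal_of_mem_nonZeroDivisors [Ring.KrullDimLE 1 R] {P : Ideal R}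
    (hP : P.IsPrime) {x : R} (hxP : x ∈ P) (hx : x ∈ nonZeroDivisors R) : P.IsMaximal :=
  (Ring.krullDimLE_one_iff.mp ‹_› P hP).resolve_left fun hmin ↦
    notMem_nonZeroDivisors_of_mem_mem_minimalPrimes hxP hmin hx

lemma IsLocalRing.exists_maximalIdeal_pow_le_span_singleton [IsNoetherianRing R]
    [IsLocalRing R] [Ring.KrullDimLE 1 R] {a : R} (ha : a ∈ nonZeroDivisors R) :
    ∃ n : ℕ, maximalIdeal R ^ n ≤ Ideal.span {a} := by
  refine Ideal.exists_pow_le_of_le_radical_of_fg ?_ (IsNoetherian.noetherian _)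
  rw [Ideal.radical_eq_sInf]
  refine le_sInf fun P ⟨haP, hP⟩ ↦ ?_
  exact (eq_maximalIdeal <|
    hP.isMaximal_of_mem_nonZeroDivisors (haP (Ideal.mem_span_singleton_self a)) ha).ge

end KrullDimOne

section Generators

variable {A : Type*} [CommRing A]

lemma Ideal.span_pair_mul_self_of_mul_self_eq_zero (x : A) {y : A} (hy : y * y = 0) :
    Ideal.span {x, y} * Ideal.span {x, y} = Ideal.span {x} * Ideal.span {x, y} := by
  refine le_antisymm ?_ (Ideal.mul_mono_left (Ideal.span_mono (by simp)))
  rw [Ideal.span_insert x, Ideal.sup_mul, Ideal.mul_sup (Ideal.span {y}),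
    Ideal.span_singleton_mul_span_singleton y y, hy, Ideal.span_singleton_zero, sup_bot_eq,
    mul_comm (Ideal.span {y})]
  exact sup_le le_rfl (Ideal.mul_mono_right le_sup_right)

noncomputable def Ideal.cotangentEquivPiOfSpanEq {ι : Type*} [Fintype ι] [DecidableEq ι]
    {I : Ideal A} (x : ι → A) (hx : Ideal.span (Set.range x) = I)
    (hind : ∀ c : ι → A, ∑ i, c i * x i ∈ I ^ 2 → ∀ i, c i ∈ I) :
    I.Cotangent ≃ₗ[A] (ι → A ⧸ I) :=
  have hxI (i : ι) : x i ∈ I := hx ▸ Ideal.subset_span ⟨i, rfl⟩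
  let comb : (ι → A) →ₗ[A] I.Cotangent :=
    I.toCotangent ∘ₗ Fintype.linearCombination A fun i ↦ (⟨x i, hxI i⟩ : I)
  have hcomb (c : ι → A) : comb c =
      I.toCotangent ⟨∑ i, c i * x i, Ideal.sum_mem _ fun i _ ↦ I.mul_mem_left _ (hxI i)⟩ := by
    simp only [comb, LinearMap.comp_apply, Fintype.linearCombination_apply]
    congr 1
    ext
    simp
  have hsurj : Function.Surjective comb := by
    intro z
    obtain ⟨w, rfl⟩ := I.toCotangent_surjective z
    obtain ⟨c, hc⟩ := Ideal.mem_span_range_iff_exists_fun.mp (hx.ge w.2)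
    exact ⟨c, by rw [hcomb]; congr⟩
  have hker : LinearMap.ker comb = Submodule.pi Set.univ fun _ ↦ I := by
    ext c
    simp only [LinearMap.mem_ker, hcomb, Ideal.toCotangent_eq_zero, Submodule.mem_pi,
      Set.mem_univ, true_implies]
    refine ⟨hind c, fun hc ↦ Ideal.sum_mem _ fun i _ ↦ ?_⟩
    rw [pow_two]
    exact Ideal.mul_mem_mul (hc i) (hxI i)
  (comb.quotKerEquivOfSurjective hsurj).symm ≪≫ₗ Submodule.quotEquivOfEq _ _ hker ≪≫ₗ
    Submodule.quotientPi _

lemma Ideal.sInf_card_spanning_eq_two {I : Ideal A} {x y : A} (hxy : x ≠ y)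
    (hI : Ideal.span {x, y} = I) (hprin : ∀ g, I ≠ Ideal.span {g}) :
    sInf {n : ℕ | ∃ s : Finset A, s.card = n ∧ Ideal.span (s : Set A) = I} = 2 := by
  classical
  have h2 : 2 ∈ {n : ℕ | ∃ s : Finset A, s.card = n ∧ Ideal.span (s : Set A) = I} :=
    ⟨{x, y}, Finset.card_pair hxy, by simpa using hI⟩
  refine le_antisymm (Nat.sInf_le h2) (le_csInf ⟨2, h2⟩ ?_)
  rintro n ⟨s, rfl, hs⟩
  by_contra! hlt
  obtain ⟨g, hg⟩ := Finset.card_le_one_iff_subset_singleton.mp (Nat.le_of_lt_succ hlt)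
  rcases Finset.subset_singleton_iff.mp hg with rfl | rfl
  · exact hprin 0 (by simpa using hs.symm)
  · exact hprin g (by simpa using hs.symm)

end Generators

namespace TrivSqZeroExt

lemma inl_mem_nonZeroDivisors {R M : Type*} [CommRing R] [AddCommGroup M] [Module R M]
    [Module Rᵐᵒᵖ M] [IsCentralScalar R M] {a : R} (ha : a ∈ nonZeroDivisors R)
    (haM : IsSMulRegular M a) : (inl a : TrivSqZeroExt R M) ∈ nonZeroDivisors _ := by
  refine mem_nonZeroDivisors_iff_right.mpr fun z hz ↦ ?_
  have hfst : fst z * a = 0 := by simpa using congrArg fst hz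
  have hsnd : a • snd z = a • 0 := by simpa using congrArg snd hz
  exact ext (mul_right_mem_nonZeroDivisors_eq_zero_iff ha |>.mp hfst) (haM hsnd)

variable {R : Type*} [CommRing R]

lemma mem_span_inl_inr_one_iff {a : R} {z : TrivSqZeroExt R R} :
    z ∈ Ideal.span {inl a, inr 1} ↔ fst z ∈ Ideal.span {a} := by
  simp only [Ideal.mem_span_pair, Ideal.mem_span_singleton']
  constructor
  · rintro ⟨u, v, rfl⟩
    exact ⟨fst u, by simp⟩
  · rintro ⟨c, hc⟩
    exact ⟨inl c, inl (snd z), ext (by simpa using hc) (by simp)⟩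

lemma comap_fstHom_span_singleton (a : R) :
    (Ideal.span {a}).comap (fstHom R R R).toRingHom = Ideal.span {inl a, inr 1} :=
  Ideal.ext fun _ ↦ mem_span_inl_inr_one_iff.symm

lemma mem_span_inl_inr_of_mul_add_mul_mem_sq {a : R} (ha : a ∈ nonZeroDivisors R)
    {c d : TrivSqZeroExt R R}
    (h : c * inl a + d * inr 1 ∈ Ideal.span {inl a, inr 1} ^ 2) :
    c ∈ Ideal.span {inl a, inr (1 : R)} ∧ d ∈ Ideal.span {inl a, inr (1 : R)} := by
  rw [pow_two, Ideal.span_pair_mul_self_of_mul_self_eq_zero _ (inr_mul_inr R 1 1),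
    Ideal.mem_span_singleton_mul] at h
  obtain ⟨w, hw, hwcd⟩ := h
  rw [mem_span_inl_inr_one_iff] at hw
  simp only [mem_span_inl_inr_one_iff]
  have hfst : a * fst w = fst c * a := by simpa using congrArg fst hwcd
  have hsnd : a * snd w = snd c * a + fst d := by simpa using congrArg snd hwcd
  have hcw : fst c = fst w :=
    (mul_cancel_left_mem_nonZeroDivisors ha).mp (by rw [hfst, mul_comm])
  exact ⟨hcw ▸ hw, Ideal.mem_span_singleton'.mpr ⟨snd w - snd c, by linear_combination hsnd⟩⟩

lemma span_inl_inr_ne_span_singleton [IsLocalRing R] {a : R} (ha : a ∈ maximalIdeal R)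
    (ha0 : a ≠ 0) (g : TrivSqZeroExt R R) :
    Ideal.span {inl a, inr (1 : R)} ≠ Ideal.span {g} := by
  intro h
  have hg : fst g ∈ maximalIdeal R := by
    have hgI : g ∈ Ideal.span {inl a, inr (1 : R)} := h ▸ Ideal.mem_span_singleton_self g
    exact (Ideal.span_singleton_le_iff_mem _).mpr ha (mem_span_inl_inr_one_iff.mp hgI)
  obtain ⟨c, hc⟩ := Ideal.mem_span_singleton'.mp (h ▸ Ideal.subset_span (by simp) :
    inr (1 : R) ∈ Ideal.span {g})
  have hc_fst : fst c * fst g = 0 := by simpa using congrArg fst hc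
  have hc_snd : fst c * snd g + snd c * fst g = 1 := by simpa using congrArg snd hc
  have hunit : IsUnit (fst c) := isUnit_of_mul_isUnit_left <|
    (isUnit_or_isUnit_of_add_one hc_snd).resolve_right
      ((mem_maximalIdeal _).mp (Ideal.mul_mem_left _ _ hg))
  obtain ⟨d, hd⟩ := Ideal.mem_span_singleton'.mp (h ▸ Ideal.subset_span (by simp) :
    inl a ∈ Ideal.span {g})
  have hd_fst : fst d * fst g = a := by simpa using congrArg fst hd
  rw [hunit.mul_right_eq_zero.mp hc_fst, mul_zero] at hd_fst
  exact ha0 hd_fst.symm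

end TrivSqZeroExt

theorem idealization_ulrich_ideal_general (R : Type*) [CommRing R]
    [IsNoetherianRing R] [IsLocalRing R]
    (hdim : ringKrullDim R = 1)
    (a : R) (ha : a ∈ maximalIdeal R) (hanzd : a ∈ nonZeroDivisors R) :
    ∀ (N I : Ideal (TrivSqZeroExt R R)),
      N = Ideal.comap (TrivSqZeroExt.fstHom R R R).toRingHom (maximalIdeal R) →
      I = Ideal.comap (TrivSqZeroExt.fstHom R R R).toRingHom (Ideal.span {a}) →
      ((I ≤ N ∧ (∃ n : ℕ, N ^ n ≤ I) ∧
        ∃ α ∈ I, α ∈ nonZeroDivisors (TrivSqZeroExt R R) ∧ I ≠ Ideal.span {α} ∧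
          I * I = Ideal.span {α} * I ∧
          ∃ n : ℕ, Nonempty (I.Cotangent ≃ₗ[TrivSqZeroExt R R]
            (Fin n → TrivSqZeroExt R R ⧸ I))) ∧
        sInf {n : ℕ | ∃ s : Finset (TrivSqZeroExt R R), s.card = n ∧
          Ideal.span (s : Set (TrivSqZeroExt R R)) = I} = 2) := by
  rintro N I rfl rfl
  have : Ring.KrullDimLE 1 R := Ring.krullDimLE_iff.mpr hdim.le
  have ha0 : a ≠ 0 := nonZeroDivisors.ne_zero hanzd
  obtain ⟨n, hn⟩ := exists_maximalIdeal_pow_le_span_singleton hanzd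
  have hI_le_N := Ideal.comap_mono (f := (fstHom R R R).toRingHom)
    ((Ideal.span_singleton_le_iff_mem _).mpr ha)
  have hN_pow_le_I := (Ideal.le_comap_pow (fstHom R R R).toRingHom n).trans (Ideal.comap_mono hn)
  rw [comap_fstHom_span_singleton] at hI_le_N hN_pow_le_I ⊢
  have hprin := span_inl_inr_ne_span_singleton ha ha0
  have hne : (inl a : TrivSqZeroExt R R) ≠ inr 1 := fun h ↦ ha0 (by simpa using congrArg fst h)
  have hsq := Ideal.span_pair_mul_self_of_mul_self_eq_zero (inl a) (inr_mul_inr R (1 : R) 1)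
  have hreg := inl_mem_nonZeroDivisors (M := R) hanzd
    (Module.Flat.isSMulRegular_of_nonZeroDivisors hanzd)
  let e := Ideal.cotangentEquivPiOfSpanEq ![inl a, inr 1]
    (congrArg Ideal.span (Matrix.range_cons_cons_empty _ _ _))
    fun c hc ↦ Fin.forall_fin_two.mpr <|
      mem_span_inl_inr_of_mul_add_mul_mem_sq hanzd (by rwa [Fin.sum_univ_two] at hc)
  exact ⟨⟨hI_le_N, ⟨n, hN_pow_le_I⟩, inl a, Ideal.subset_span (by simp), hreg, hprin _, hsq, 2,
    ⟨e⟩⟩, Ideal.sInf_card_spanning_eq_two hne rfl hprin⟩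

/-- **Example 2.7**: if `R` is a one-dimensional Cohen–Macaulay Noetherian local ring,
`a ∈ 𝔪` a nonzerodivisor, and `A = R ⋉ R` the idealization of `R` over itself, then
`I = (a) × R` is an Ulrich ideal of `A` with `μ_A(I) = 2`.  Here the maximal ideal of
`A` is `𝔫 = 𝔪 × R`, and Ulrich means: `I` is `𝔫`-primary and there is a nonzerodivisor
`α ∈ I` with `I ≠ (α)`, `I² = αI` and `I/I²` a free `A/I`-module. -/
theorem idealization_ulrich_ideal (R : Type*) [CommRing R]
    [IsNoetherianRing R] [IsLocalRing R]
    (hdim : ringKrullDim R = 1)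
    (hCM : ∃ x ∈ maximalIdeal R, x ∈ nonZeroDivisors R)
    (a : R) (ha : a ∈ maximalIdeal R) (hanzd : a ∈ nonZeroDivisors R) :
    ∀ (N I : Ideal (TrivSqZeroExt R R)),
      N = Ideal.comap (TrivSqZeroExt.fstHom R R R).toRingHom (maximalIdeal R) →
      I = Ideal.comap (TrivSqZeroExt.fstHom R R R).toRingHom (Ideal.span {a}) →
      ((I ≤ N ∧ (∃ n : ℕ, N ^ n ≤ I) ∧
        ∃ α ∈ I, α ∈ nonZeroDivisors (TrivSqZeroExt R R) ∧ I ≠ Ideal.span {α} ∧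
          I * I = Ideal.span {α} * I ∧
          ∃ n : ℕ, Nonempty (I.Cotangent ≃ₗ[TrivSqZeroExt R R]
            (Fin n → TrivSqZeroExt R R ⧸ I))) ∧
        sInf {n : ℕ | ∃ s : Finset (TrivSqZeroExt R R), s.card = n ∧
          Ideal.span (s : Set (TrivSqZeroExt R R)) = I} = 2) :=
  idealization_ulrich_ideal_general R hdim a ha hanzd
end
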